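/- In P¹(F_{27}) with θ(x) = x + x⁻¹, the functional graph of θ has exactly 3 connected components: the fixed point ∞ (with the single tree vertex 0 attached), the 2-cycle {1, −1}, and one cycle of length 12 consisting of the elements α with ord(ψ(α)) = 13, each cycle vertex of the 12-cycle and ∞ being the root of a binary tree of depth 1. -/

import Mathlib

open OnePoint

variable (F : Type*) [Field F] [DecidableEq F]

/-- The map `θ(x) = x + x⁻¹`, with `θ(0) = θ(∞) = ∞`. -/
def theta : OnePoint F → OnePoint F
  | Option.some x => if x = 0 then ∞ else Option.some (x + x⁻¹)
  | Option.none => ∞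

/-- The inverse-square map `s(x) = x⁻²`, with `s(0) = ∞`, `s(∞) = 0`. -/
def sMap : OnePoint F → OnePoint F
  | Option.some x => if x = 0 then ∞ else Option.some (x⁻¹ ^ 2)
  | Option.none => Option.some 0

/-- The involution `ψ(x) = (x+1)/(x-1)`, with `ψ(1) = ∞`, `ψ(∞) = 1`. -/
def psi : OnePoint F → OnePoint F
  | Option.some x => if x = 1 then ∞ else Option.some ((x + 1) / (x - 1))
  | Option.none => Option.some 1

/-!
In characteristic 3 the involution `ψ` conjugates `θ` to `s(x) = x⁻²`, because
`(x + x⁻¹ + 1) / (x + x⁻¹ - 1) = (x² + x + 1) / (x² - x + 1) = ((x - 1) / (x + 1))²`.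
The map `s` swaps `0` and `∞`, and on units `s^[k] u = u ^ (-2) ^ k`, so `u` is periodic iff
`-2` is invertible modulo `ord u`, and then its minimal period is the order of `-2` there.
In `F₂₇ˣ ≅ ℤ/26` this means `u ^ 13 = 1`; the fixed point `1` aside, these are the twelve elements
of order 13, each of minimal period `ord₁₃(-2) = 12`, so they form one cycle. A periodic `u ≠ 0`
has the two `s`-preimages `±c` with `c² = u⁻¹`; exactly one of them, `-u⁶`, satisfies
`c ^ 13 = -1` and is not periodic. Pulling back along `ψ` gives the statement for `θ`.
-/

open Function Set

section Dynamics

variable {α : Type*} {e f g : α → α}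

lemma Function.Semiconj.swap_of_involutive (he : Involutive e) (h : Semiconj e f g) :
    Semiconj e g f := fun x => by rw [← he (f (e x)), h, he]

lemma Function.Semiconj.isPeriodicPt_iff_of_involutive (he : Involutive e) (h : Semiconj e f g)
    {n : ℕ} {x : α} : IsPeriodicPt f n x ↔ IsPeriodicPt g n (e x) :=
  ⟨fun hx => hx.map h, fun hx => he x ▸ hx.map (h.swap_of_involutive he)⟩

lemma Function.Semiconj.mem_periodicPts_iff_of_involutive (he : Involutive e)
    (h : Semiconj e f g) {x : α} : x ∈ periodicPts f ↔ e x ∈ periodicPts g := by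
  simp only [mem_periodicPts, h.isPeriodicPt_iff_of_involutive he]

lemma Function.Semiconj.minimalPeriod_eq_of_involutive (he : Involutive e) (h : Semiconj e f g)
    (x : α) : minimalPeriod f x = minimalPeriod g (e x) :=
  minimalPeriod_eq_minimalPeriod_iff.mpr fun _ => h.isPeriodicPt_iff_of_involutive he

lemma ncard_range_iterate {x : α} (hx : x ∈ periodicPts f) :
    (range fun n => f^[n] x).ncard = minimalPeriod f x := by
  have hpos := minimalPeriod_pos_of_mem_periodicPts hx
  have hrange : (range fun n => f^[n] x) = (f^[·] x) '' Iio (minimalPeriod f x) := by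
    ext y
    constructor
    · rintro ⟨n, rfl⟩
      exact ⟨n % minimalPeriod f x, Nat.mod_lt _ hpos, iterate_mod_minimalPeriod_eq⟩
    · rintro ⟨n, -, rfl⟩
      exact mem_range_self n
  rw [hrange, iterate_injOn_Iio_minimalPeriod.ncard_image, ← Finset.coe_Iio,
    ncard_coe_finset, Nat.card_Iio]

lemma range_iterate_eq_of_mem_range {x y : α} (hx : x ∈ periodicPts f)
    (hy : y ∈ range fun n => f^[n] x) : (range fun n => f^[n] y) = range fun n => f^[n] x := by
  obtain ⟨m, rfl⟩ := hy
  obtain ⟨_ | q, hq, hp⟩ := hx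
  · exact absurd hq (lt_irrefl 0)
  ext z
  constructor
  · rintro ⟨n, rfl⟩
    exact ⟨n + m, iterate_add_apply f n m x⟩
  · rintro ⟨n, rfl⟩
    refine ⟨n + m * q, ?_⟩
    dsimp only
    rw [← iterate_add_apply, show n + m * q + m = n + m * (q + 1) by ring, iterate_add_apply,
      (hp.const_mul m).eq]

end Dynamics

lemma two_ne_zero_of_charP_three {R : Type*} [CommRing R] [Nontrivial R] [CharP R 3] :
    (2 : R) ≠ 0 :=
  fun h => one_ne_zero (by linear_combination CharP.ofNat_eq_zero R 3 - h : (1 : R) = 0)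

lemma orderOf_neg_two_zmod_thirteen : orderOf (-2 : ZMod 13) = 12 :=
  (orderOf_eq_iff (by norm_num)).mpr ⟨by decide, by decide⟩

lemma charP_three_of_card_eq_27 {K : Type*} [Field K] [Fintype K] (hK : Fintype.card K = 27) :
    CharP K 3 :=
  charP_of_card_eq_prime_pow (p := 3) (f := 3) hK

lemma ncard_setOf_orderOf_eq {K : Type*} [Field K] [Fintype K] {n : ℕ}
    (hn : n ∣ Fintype.card K - 1) : {b : K | orderOf b = n}.ncard = n.totient := by
  classical
  have hn0 : n ≠ 0 := by
    rintro rfl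
    have := Fintype.one_lt_card (α := K)
    omega
  have himage : {b : K | orderOf b = n} = Units.val '' {u : Kˣ | orderOf u = n} := by
    ext b
    constructor
    · intro hb
      have hb0 : b ≠ 0 := by
        rintro rfl
        exact hn0 (hb ▸ orderOf_eq_zero_iff.mpr fun h => not_isUnit_zero h.isUnit)
      exact ⟨Units.mk0 b hb0, by simpa [← orderOf_units] using hb, rfl⟩
    · rintro ⟨u, hu, rfl⟩
      exact orderOf_units.trans hu
  rw [himage, ncard_image_of_injective _ Units.val_injective, ← Finset.coe_filter_univ,
    ncard_coe_finset, IsCyclic.card_orderOf_eq_totient (by rwa [Fintype.card_units])]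

variable {F}

@[simp] lemma theta_infty : theta F ∞ = ∞ := rfl

@[simp] lemma theta_zero : theta F (0 : F) = ∞ := if_pos rfl

lemma theta_coe {x : F} (hx : x ≠ 0) : theta F x = ↑(x + x⁻¹) := if_neg hx

lemma theta_eq_infty_iff {x : OnePoint F} : theta F x = ∞ ↔ x = (0 : F) ∨ x = ∞ := by
  induction x using OnePoint.rec with
  | infty => simp
  | coe x =>
    by_cases hx : x = 0
    · simp [hx]
    · simp [theta_coe hx, hx]

@[simp] lemma psi_infty : psi F ∞ = (1 : F) := rfl

@[simp] lemma psi_one : psi F (1 : F) = ∞ := if_pos rfl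

lemma psi_coe {x : F} (hx : x ≠ 1) : psi F x = ↑((x + 1) / (x - 1)) := if_neg hx

@[simp] lemma psi_zero : psi F (0 : F) = (-1 : F) := by
  simp [psi_coe zero_ne_one]

lemma psi_involutive (h2 : (2 : F) ≠ 0) : Involutive (psi F) := by
  intro x
  induction x using OnePoint.rec with
  | infty => simp
  | coe x =>
    by_cases hx : x = 1
    · simp [hx]
    have hx' : x - 1 ≠ 0 := sub_ne_zero.mpr hx
    have hψ : (x + 1) / (x - 1) ≠ 1 := by
      rw [Ne, div_eq_one_iff_eq hx']
      intro h
      exact h2 (by linear_combination h)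
    rw [psi_coe hx, psi_coe hψ]
    congr 1
    rw [div_add_one hx', div_sub_one hx', div_div_div_cancel_right₀ hx',
      show x + 1 + (x - 1) = 2 * x by ring, show x + 1 - (x - 1) = 2 by ring,
      mul_div_cancel_left₀ x h2]

@[simp] lemma sMap_infty : sMap F ∞ = (0 : F) := rfl

@[simp] lemma sMap_zero : sMap F (0 : F) = ∞ := if_pos rfl

lemma sMap_coe {x : F} (hx : x ≠ 0) : sMap F x = ↑(x⁻¹ ^ 2) := if_neg hx

lemma sMap_coe_units (u : Fˣ) : sMap F (u : F) = ((u ^ (-2 : ℤ) : Fˣ) : F) := by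
  rw [sMap_coe u.ne_zero]
  simp [zpow_neg]

lemma iterate_sMap_coe_units (u : Fˣ) (k : ℕ) :
    (sMap F)^[k] (u : F) = ((u ^ ((-2 : ℤ) ^ k) : Fˣ) : F) := by
  induction k with
  | zero => simp
  | succ k ih => rw [iterate_succ_apply', ih, sMap_coe_units, ← zpow_mul, pow_succ]

lemma isPeriodicPt_sMap_coe_units_iff (u : Fˣ) (k : ℕ) :
    IsPeriodicPt (sMap F) k (u : F) ↔ (-2 : ZMod (orderOf u)) ^ k = 1 := by
  rw [IsPeriodicPt, IsFixedPt, iterate_sMap_coe_units, OnePoint.coe_eq_coe, Units.val_inj,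
    ← mul_inv_eq_one, ← zpow_sub_one, ← orderOf_dvd_iff_zpow_eq_one,
    ← ZMod.intCast_zmod_eq_zero_iff_dvd, ← sub_eq_zero (b := (1 : ZMod _))]
  push_cast
  rfl

lemma minimalPeriod_sMap_coe_units (u : Fˣ) :
    minimalPeriod (sMap F) (u : F) = orderOf (-2 : ZMod (orderOf u)) :=
  minimalPeriod_eq_minimalPeriod_iff.mpr fun k => by
    rw [isPeriodicPt_sMap_coe_units_iff, isPeriodicPt_mul_iff_pow_eq_one]

lemma coe_units_mem_periodicPts_sMap_iff [Finite F] (u : Fˣ) :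
    ((u : F) : OnePoint F) ∈ periodicPts (sMap F) ↔ Odd (orderOf u) := by
  have : NeZero (orderOf u) := ⟨(orderOf_pos u).ne'⟩
  rw [← minimalPeriod_pos_iff_mem_periodicPts, minimalPeriod_sMap_coe_units, orderOf_pos_iff,
    isOfFinOrder_iff_isUnit, IsUnit.neg_iff, ← Nat.cast_ofNat, ZMod.isUnit_iff_coprime,
    Nat.coprime_two_left]

section CharThree

variable [CharP F 3]

lemma theta_one : theta F (1 : F) = (-1 : F) := by
  rw [theta_coe one_ne_zero, inv_one]
  congr 1
  linear_combination CharP.ofNat_eq_zero F 3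

lemma theta_neg_one : theta F (-1 : F) = (1 : F) := by
  rw [theta_coe (neg_ne_zero.mpr one_ne_zero), inv_neg, inv_one]
  congr 1
  linear_combination -CharP.ofNat_eq_zero F 3

lemma isPeriodicPt_theta_one : IsPeriodicPt (theta F) 2 (1 : F) := by
  simp [IsPeriodicPt, IsFixedPt, theta_one, theta_neg_one]

lemma isPeriodicPt_theta_neg_one : IsPeriodicPt (theta F) 2 (-1 : F) := by
  simp [IsPeriodicPt, IsFixedPt, theta_one, theta_neg_one]

@[simp] lemma psi_neg_one : psi F (-1 : F) = (0 : F) := by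
  have h2 := two_ne_zero_of_charP_three (R := F)
  rw [psi_coe fun h => h2 (by linear_combination -h)]
  simp

lemma psi_semiconj_theta : Semiconj (psi F) (theta F) (sMap F) := by
  have h3 : (3 : F) = 0 := CharP.ofNat_eq_zero F 3
  intro x
  induction x using OnePoint.rec with
  | infty => simp [sMap_coe one_ne_zero]
  | coe x =>
    by_cases hx0 : x = 0
    · simp [hx0, sMap_coe (neg_ne_zero.mpr one_ne_zero : (-1 : F) ≠ 0)]
    by_cases hx1 : x = 1
    · simp [hx1, theta_one]
    by_cases hxn : x = -1
    · simp [hxn, theta_neg_one]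
    have hx1' : x - 1 ≠ 0 := sub_ne_zero.mpr hx1
    have hxn' : x + 1 ≠ 0 := fun h => hxn (by linear_combination h)
    have hq : x ^ 2 + 1 - x ≠ 0 := by
      intro h
      have : (x + 1) ^ 2 = 0 := by linear_combination h + x * h3
      exact hxn' (pow_eq_zero_iff two_ne_zero |>.mp this)
    have hθ : x + x⁻¹ ≠ 1 := by
      intro h
      field_simp at h
      exact hq (by linear_combination h)
    rw [theta_coe hx0, psi_coe hθ, psi_coe hx1, sMap_coe (div_ne_zero hxn' hx1')]
    congr 1
    field_simp
    linear_combination (2 * x ^ 3 + 2 * x) * h3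

end CharThree

variable (F) in
def psiOrderSet (n : ℕ) : Set (OnePoint F) := {α | ∃ b : F, psi F α = b ∧ orderOf b = n}

lemma ncard_psiOrderSet [Fintype F] (h2 : (2 : F) ≠ 0) {n : ℕ} (hn : n ∣ Fintype.card F - 1) :
    (psiOrderSet F n).ncard = n.totient := by
  have hψ := psi_involutive h2
  have : psiOrderSet F n = psi F ⁻¹' ((↑) '' {b : F | orderOf b = n}) := by
    ext α
    simp [psiOrderSet, eq_comm, and_comm]
  rw [this,
    ncard_preimage_of_injective_subset_range hψ.injective (by simp [hψ.surjective.range_eq]),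
    ncard_image_of_injective _ OnePoint.coe_injective, ncard_setOf_orderOf_eq hn]

lemma minimalPeriod_theta_of_mem_psiOrderSet [CharP F 3] {n : ℕ} (hn : n ≠ 0) {α : OnePoint F}
    (hα : α ∈ psiOrderSet F n) : minimalPeriod (theta F) α = orderOf (-2 : ZMod n) := by
  obtain ⟨b, hψα, rfl⟩ := hα
  have hb : b ≠ 0 := by rintro rfl; simp at hn
  lift b to Fˣ using isUnit_iff_ne_zero.mpr hb
  rw [psi_semiconj_theta.minimalPeriod_eq_of_involutive (psi_involutive two_ne_zero_of_charP_three),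
    hψα, minimalPeriod_sMap_coe_units, orderOf_units]

section Card27

variable [Fintype F]

lemma mem_periodicPts_sMap_iff (hF : Fintype.card F = 27) {y : OnePoint F} :
    y ∈ periodicPts (sMap F) ↔ y = ∞ ∨ y = (0 : F) ∨ ∃ b : F, y = b ∧ b ^ 13 = 1 := by
  induction y using OnePoint.rec with
  | infty => simpa using ⟨2, two_pos, by simp [IsPeriodicPt, IsFixedPt]⟩
  | coe b =>
    by_cases hb : b = 0
    · subst hb
      simpa using ⟨2, two_pos, by simp [IsPeriodicPt, IsFixedPt]⟩
    lift b to Fˣ using isUnit_iff_ne_zero.mpr hb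
    have h26 : orderOf b ∣ 2 * 13 := by
      simpa [Fintype.card_units, hF] using orderOf_dvd_card (x := b)
    rw [coe_units_mem_periodicPts_sMap_iff]
    simp only [OnePoint.coe_eq_coe, exists_eq_left', OnePoint.coe_ne_infty, hb, false_or,
      ← orderOf_dvd_iff_pow_eq_one, orderOf_units]
    exact ⟨fun h => (Nat.coprime_two_right.mpr h).dvd_of_dvd_mul_left h26,
      fun h => Odd.of_dvd_nat (by decide : Odd 13) h⟩

lemma sMap_mem_periodicPts (hF : Fintype.card F = 27) (y : OnePoint F) :
    sMap F y ∈ periodicPts (sMap F) := by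
  rw [mem_periodicPts_sMap_iff hF]
  induction y using OnePoint.rec with
  | infty => simp
  | coe b =>
    by_cases hb : b = 0
    · simp [hb]
    have h26 : b ^ 26 = 1 := by simpa [hF] using FiniteField.pow_card_sub_one_eq_one b hb
    refine Or.inr (Or.inr ⟨_, sMap_coe hb, ?_⟩)
    rw [← pow_mul, inv_pow, h26, inv_one]

lemma setOf_sMap_eq_and_not_mem_periodicPts (hF : Fintype.card F = 27) {b : F} (hb : b ^ 13 = 1) :
    {y | sMap F y = b ∧ y ∉ periodicPts (sMap F)} = {((-b ^ 6 : F) : OnePoint F)} := by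
  have := charP_three_of_card_eq_27 hF
  have hb0 : b ≠ 0 := by rintro rfl; simp at hb
  ext y
  simp only [mem_ofPred_eq, mem_singleton_iff, mem_periodicPts_sMap_iff hF, not_or, not_exists,
    not_and]
  induction y using OnePoint.rec with
  | infty => simp
  | coe c =>
    by_cases hc : c = 0
    · simp [hc, hb0]
    have h26 : c ^ 26 = 1 := by simpa [hF] using FiniteField.pow_card_sub_one_eq_one c hc
    simp only [sMap_coe hc, OnePoint.coe_eq_coe, OnePoint.coe_ne_infty, hc, not_false_eq_true,
      forall_eq', true_and]
    constructor
    · rintro ⟨rfl, h13⟩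
      have hm : c ^ 13 = -1 :=
        (mul_self_eq_one_iff.mp (by rw [← pow_add, h26])).resolve_left h13
      field_simp
      linear_combination hm
    · rintro rfl
      have hc13 : (-b ^ 6) ^ 13 = -1 := by
        rw [Odd.neg_pow (by decide), ← pow_mul, mul_comm, pow_mul, hb, one_pow]
      refine ⟨by field_simp; linear_combination -hb, fun h => ?_⟩
      exact two_ne_zero_of_charP_three (R := F) (by linear_combination hc13 - h)

lemma ncard_psiOrderSet_thirteen (hF : Fintype.card F = 27) : (psiOrderSet F 13).ncard = 12 := by
  have := charP_three_of_card_eq_27 hF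
  rw [ncard_psiOrderSet two_ne_zero_of_charP_three (by rw [hF]; norm_num),
    Nat.totient_prime (by norm_num)]

lemma minimalPeriod_theta_of_mem_psiOrderSet_thirteen (hF : Fintype.card F = 27) {α : OnePoint F}
    (hα : α ∈ psiOrderSet F 13) : minimalPeriod (theta F) α = 12 := by
  have := charP_three_of_card_eq_27 hF
  rw [minimalPeriod_theta_of_mem_psiOrderSet (by norm_num) hα, orderOf_neg_two_zmod_thirteen]

lemma mem_periodicPts_theta_iff (hF : Fintype.card F = 27) {α : OnePoint F} :
    α ∈ periodicPts (theta F) ↔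
      α = ∞ ∨ α = (1 : F) ∨ α = (-1 : F) ∨ α ∈ psiOrderSet F 13 := by
  have := charP_three_of_card_eq_27 hF
  have hψ := psi_involutive (two_ne_zero_of_charP_three (R := F))
  have : Fact (Nat.Prime 13) := ⟨by norm_num⟩
  have hcoe :
      (∃ b : F, psi F α = b ∧ b ^ 13 = 1) ↔ α = ∞ ∨ α ∈ psiOrderSet F 13 := by
    simp only [psiOrderSet, mem_ofPred_eq, orderOf_eq_prime_iff]
    constructor
    · rintro ⟨b, h, hb⟩
      by_cases hb1 : b = 1
      · rw [hψ.eq_iff.mp h, hb1, psi_one]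
        exact Or.inl rfl
      · exact Or.inr ⟨b, h, hb, hb1⟩
    · rintro (rfl | ⟨b, h, hb, -⟩)
      · exact ⟨1, psi_infty, one_pow _⟩
      · exact ⟨b, h, hb⟩
  rw [psi_semiconj_theta.mem_periodicPts_iff_of_involutive hψ, mem_periodicPts_sMap_iff hF,
    hψ.eq_iff, hψ.eq_iff, psi_infty, psi_zero, hcoe]
  tauto

lemma theta_mem_periodicPts (hF : Fintype.card F = 27) (x : OnePoint F) :
    theta F x ∈ periodicPts (theta F) := by
  have := charP_three_of_card_eq_27 hF
  rw [psi_semiconj_theta.mem_periodicPts_iff_of_involutive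
    (psi_involutive two_ne_zero_of_charP_three), psi_semiconj_theta]
  exact sMap_mem_periodicPts hF _

lemma ncard_setOf_theta_eq_and_not_mem_periodicPts (hF : Fintype.card F = 27) {α : OnePoint F}
    (hα : α ∈ periodicPts (theta F)) (h1 : α ≠ (1 : F)) (hn1 : α ≠ (-1 : F)) :
    {x | theta F x = α ∧ x ∉ periodicPts (theta F)}.ncard = 1 := by
  have := charP_three_of_card_eq_27 hF
  have hψ := psi_involutive (two_ne_zero_of_charP_three (R := F))
  have hconj := psi_semiconj_theta (F := F)
  obtain ⟨b, hψα, hb⟩ : ∃ b : F, psi F α = b ∧ b ^ 13 = 1 := by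
    rw [hconj.mem_periodicPts_iff_of_involutive hψ, mem_periodicPts_sMap_iff hF, hψ.eq_iff,
      hψ.eq_iff, psi_infty, psi_zero] at hα
    tauto
  have hpre : {x | theta F x = α ∧ x ∉ periodicPts (theta F)} =
      psi F ⁻¹' {y | sMap F y = b ∧ y ∉ periodicPts (sMap F)} := by
    ext x
    simp only [mem_ofPred_eq, mem_preimage, ← hψα, ← hconj x, hψ.injective.eq_iff,
      hconj.mem_periodicPts_iff_of_involutive hψ]
  rw [hpre, setOf_sMap_eq_and_not_mem_periodicPts hF hb,
    ncard_preimage_of_injective_subset_range hψ.injective (by simp [hψ.surjective.range_eq]),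
    ncard_singleton]

lemma mem_psiOrderSet_of_minimalPeriod_theta_eq (hF : Fintype.card F = 27) {α : OnePoint F}
    (hα : minimalPeriod (theta F) α = 12) : α ∈ psiOrderSet F 13 := by
  have := charP_three_of_card_eq_27 hF
  have hnot2 : ¬IsPeriodicPt (theta F) 2 α := fun h => by
    simpa [hα] using h.minimalPeriod_dvd
  rcases (mem_periodicPts_theta_iff hF).mp
    (minimalPeriod_pos_iff_mem_periodicPts.mp (by rw [hα]; norm_num)) with rfl | rfl | rfl | h
  · exact absurd ((show IsFixedPt (theta F) ∞ from rfl).isPeriodicPt 2) hnot2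
  · exact absurd isPeriodicPt_theta_one hnot2
  · exact absurd isPeriodicPt_theta_neg_one hnot2
  · exact h

lemma range_iterate_theta_of_mem_psiOrderSet (hF : Fintype.card F = 27) {α : OnePoint F}
    (hα : α ∈ psiOrderSet F 13) : (range fun n => (theta F)^[n] α) = psiOrderSet F 13 := by
  have hmin := minimalPeriod_theta_of_mem_psiOrderSet_thirteen hF hα
  have hper : α ∈ periodicPts (theta F) :=
    minimalPeriod_pos_iff_mem_periodicPts.mp (by rw [hmin]; norm_num)
  have hsub : (range fun n => (theta F)^[n] α) ⊆ psiOrderSet F 13 := by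
    rintro _ ⟨n, rfl⟩
    exact mem_psiOrderSet_of_minimalPeriod_theta_eq hF (minimalPeriod_apply_iterate hper n ▸ hmin)
  refine eq_of_subset_of_ncard_le hsub ?_ (toFinite _)
  rw [ncard_range_iterate hper, ncard_psiOrderSet_thirteen hF, hmin]

lemma setOf_cycles_theta_eq (hF : Fintype.card F = 27) :
    {C : Set (OnePoint F) | ∃ α ∈ periodicPts (theta F), C = range fun n => (theta F)^[n] α} =
      {range fun n => (theta F)^[n] ∞, range fun n => (theta F)^[n] (1 : F),
        psiOrderSet F 13} := by
  have := charP_three_of_card_eq_27 hF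
  have hper_one : ((1 : F) : OnePoint F) ∈ periodicPts (theta F) :=
    (mem_periodicPts_theta_iff hF).mpr (by simp)
  obtain ⟨α₀, hα₀⟩ : (psiOrderSet F 13).Nonempty :=
    nonempty_of_ncard_ne_zero (by rw [ncard_psiOrderSet_thirteen hF]; norm_num)
  ext C
  simp only [mem_ofPred_eq, mem_insert_iff, mem_singleton_iff]
  constructor
  · rintro ⟨α, hα, rfl⟩
    rcases (mem_periodicPts_theta_iff hF).mp hα with rfl | rfl | rfl | h
    · exact Or.inl rfl
    · exact Or.inr (Or.inl rfl)
    · exact Or.inr (Or.inl (range_iterate_eq_of_mem_range hper_one ⟨1, theta_one⟩))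
    · exact Or.inr (Or.inr (range_iterate_theta_of_mem_psiOrderSet hF h))
  · rintro (rfl | rfl | rfl)
    · exact ⟨∞, (mem_periodicPts_theta_iff hF).mpr (by simp), rfl⟩
    · exact ⟨_, hper_one, rfl⟩
    · exact ⟨α₀, (mem_periodicPts_theta_iff hF).mpr (by simp [hα₀]),
        (range_iterate_theta_of_mem_psiOrderSet hF hα₀).symm⟩

lemma ncard_cycles_theta (hF : Fintype.card F = 27) :
    {C : Set (OnePoint F) | ∃ α ∈ periodicPts (theta F),
      C = range fun n => (theta F)^[n] α}.ncard = 3 := by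
  have hinfty_nmem : ∞ ∉ psiOrderSet F 13 := by simp [psiOrderSet]
  have hone_nmem : ((1 : F) : OnePoint F) ∉ psiOrderSet F 13 := by simp [psiOrderSet]
  rw [setOf_cycles_theta_eq hF, ncard_eq_three]
  refine ⟨_, _, _, ?_, ?_, ?_, rfl⟩
  · intro h
    obtain ⟨n, hn⟩ := h ▸ mem_range_self (f := fun n => (theta F)^[n] (1 : F)) 0
    simp [iterate_fixed (show theta F ∞ = ∞ from rfl)] at hn
  · exact fun h => hinfty_nmem (h ▸ mem_range_self 0)
  · exact fun h => hone_nmem (h ▸ mem_range_self 0)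

end Card27

theorem graph_F27 [Fintype F] (hF : Fintype.card F = 27) :
    theta F ∞ = ∞ ∧
    theta F ((1 : F) : OnePoint F) = ((-1 : F) : OnePoint F) ∧
    theta F ((-1 : F) : OnePoint F) = ((1 : F) : OnePoint F) ∧
    (∀ x : OnePoint F, theta F x = ∞ ↔ x = ((0 : F) : OnePoint F) ∨ x = ∞) ∧
    {α : OnePoint F | ∃ b : F, psi F α = (b : OnePoint F) ∧ orderOf b = 13}.ncard
      = 12 ∧
    (∀ α ∈ {α : OnePoint F | ∃ b : F, psi F α = (b : OnePoint F) ∧ orderOf b = 13},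
      Function.minimalPeriod (theta F) α = 12) ∧
    (∀ x : OnePoint F, ∃ k : ℕ, 0 < k ∧
      (theta F)^[k] (theta F x) = theta F x) ∧
    (∀ α : OnePoint F, (∃ k : ℕ, 0 < k ∧ (theta F)^[k] α = α) →
      α ≠ ((1 : F) : OnePoint F) → α ≠ ((-1 : F) : OnePoint F) →
      {x : OnePoint F | theta F x = α ∧
        ¬ ∃ k : ℕ, 0 < k ∧ (theta F)^[k] x = x}.ncard = 1) ∧
    {C : Set (OnePoint F) | ∃ α : OnePoint F,
        (∃ k : ℕ, 0 < k ∧ (theta F)^[k] α = α) ∧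
        C = Set.range (fun i : ℕ => (theta F)^[i] α)}.ncard = 3 := by
  have := charP_three_of_card_eq_27 hF
  exact ⟨theta_infty, theta_one, theta_neg_one, fun _ => theta_eq_infty_iff,
    ncard_psiOrderSet_thirteen hF, fun _ => minimalPeriod_theta_of_mem_psiOrderSet_thirteen hF,
    theta_mem_periodicPts hF, fun _ hα => ncard_setOf_theta_eq_and_not_mem_periodicPts hF hα,
    ncard_cycles_theta hF⟩
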